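/- Let n be a positive integer, let D and μ be probability distributions on {0,1}^n, let U be the uniform distribution on {0,1}^n, and define μ'(x) = (1 − 2^{−n})·μ(x) + 2^{−2n} and f_{μ'}(x) = log₂(2^{−n}/μ'(x)). Let ε ≥ 0. If KL(D‖μ) ≤ KL(D‖U) and |Σ_x D(x)·f_{μ'}(x) − Σ_x 2^{−n}·f_{μ'}(x)| ≤ ε, then the statistical distance between U and μ satisfies Δ(U, μ) ≤ sqrt((ε + log₂(1/(1 − 2^{−n})))/2) + 2^{−n}. -/

import Mathlib

open Finset

/-- KL-divergence (base 2) between two probability mass functions on a finite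
type, with the conventions `0 * log₂ (0 / q) = 0` and `KL(τ‖μ) = ⊤` if
`τ x > 0 = μ x` for some `x`. -/
noncomputable def KL {α : Type*} [Fintype α] (τ μ : α → ℝ) : EReal :=
  if ∃ x, 0 < τ x ∧ μ x = 0 then ⊤
  else ((∑ x, τ x * Real.logb 2 (τ x / μ x) : ℝ) : EReal)

noncomputable def gfun : ℝ → ℝ := fun t => (t+1)*(t*Real.log t - t + 1) - Real.log 2*(t-1)^2
noncomputable def g1fun : ℝ → ℝ := fun t => (2*t+1)*Real.log t - (1 + 2*Real.log 2)*(t-1)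

lemma hasDeriv_g {x : ℝ} (hx : 0 < x) : HasDerivAt gfun (g1fun x) x := by
  have hlog := Real.hasDerivAt_log hx.ne'
  have h1 : HasDerivAt (fun t : ℝ => t * Real.log t) (Real.log x + 1) x := by
    exact ((hasDerivAt_id' x).mul hlog).congr_deriv (by rw [mul_inv_cancel₀ hx.ne']; ring)
  have h2 : HasDerivAt (fun t : ℝ => t * Real.log t - t + 1) (Real.log x) x := by
    simpa using (h1.sub (hasDerivAt_id x)).add_const 1
  have h3 : HasDerivAt (fun t : ℝ => (t+1)*(t*Real.log t - t + 1))
      (1 * (x*Real.log x - x + 1) + (x+1) * Real.log x) x :=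
    ((hasDerivAt_id x).add_const 1).mul h2
  have h4 : HasDerivAt (fun t : ℝ => Real.log 2*(t-1)^2) (Real.log 2 * (2*(x-1))) x := by
    have : HasDerivAt (fun t : ℝ => (t-1)^2) (2*(x-1)) x := by
      exact (((hasDerivAt_id' x).sub_const 1).pow 2).congr_deriv (by norm_num)
    simpa [mul_comm, mul_assoc] using this.const_mul (Real.log 2)
  have := h3.sub h4
  refine this.congr_deriv ?_
  unfold g1fun; ring

lemma hasDeriv_g1 {x : ℝ} (hx : 0 < x) :
    HasDerivAt g1fun (2*Real.log x + x⁻¹ + 1 - 2*Real.log 2) x := by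
  have hlog := Real.hasDerivAt_log hx.ne'
  have h1 : HasDerivAt (fun t : ℝ => (2*t+1)*Real.log t)
      (2 * Real.log x + (2*x+1) * x⁻¹) x := by
    exact ((((hasDerivAt_id' x).const_mul 2).add_const 1).mul hlog).congr_deriv (by ring)
  have h2 : HasDerivAt (fun t : ℝ => (1 + 2*Real.log 2)*(t-1)) (1 + 2*Real.log 2) x := by
    simpa using (((hasDerivAt_id x).sub_const 1).const_mul (1 + 2*Real.log 2))
  have := h1.sub h2
  refine this.congr_deriv ?_
  field_simp
  ring

lemma g2_pos {x : ℝ} (hx : 0 < x) : 0 < 2*Real.log x + x⁻¹ + 1 - 2*Real.log 2 := by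
  have h2x : (0:ℝ) < 2*x := by linarith
  have h := Real.one_sub_inv_le_log_of_pos h2x
  rw [Real.log_mul (by norm_num) hx.ne'] at h
  have hlt : Real.log 2 < 0.6931471808 := Real.log_two_lt_d9
  have hxi : (2*x)⁻¹ = x⁻¹ / 2 := by rw [mul_inv]; ring
  rw [hxi] at h
  nlinarith [h]

lemma key_log_ineq {t : ℝ} (ht : 0 < t) :
    Real.log 2 * (t - 1) ^ 2 ≤ (t + 1) * (t * Real.log t - t + 1) := by
  have hg1mono : StrictMonoOn g1fun (Set.Ioi 0) := by
    apply strictMonoOn_of_hasDerivWithinAt_pos (convex_Ioi 0)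
    · exact fun x hx => (hasDeriv_g1 hx).continuousAt.continuousWithinAt
    · intro x hx
      rw [interior_Ioi] at hx
      exact (hasDeriv_g1 hx).hasDerivWithinAt
    · intro x hx
      rw [interior_Ioi] at hx
      exact g2_pos hx
  have hg11 : g1fun 1 = 0 := by simp [g1fun]
  have hg1 : gfun 1 = 0 := by simp [gfun]
  have main : 0 ≤ gfun t := by
    rcases le_or_gt 1 t with h1 | h1
    · have hmono : MonotoneOn gfun (Set.Ici 1) := by
        apply monotoneOn_of_deriv_nonneg (convex_Ici 1)
        · exact fun x hx => (hasDeriv_g (lt_of_lt_of_le one_pos hx)).continuousAt.continuousWithinAt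
        · intro x hx
          rw [interior_Ici] at hx
          exact (hasDeriv_g (lt_trans one_pos hx)).differentiableAt.differentiableWithinAt
        · intro x hx
          rw [interior_Ici] at hx
          rw [(hasDeriv_g (lt_trans one_pos hx)).deriv]
          have := hg1mono (Set.mem_Ioi.mpr one_pos) (Set.mem_Ioi.mpr (lt_trans one_pos hx)) hx
          rw [hg11] at this
          exact this.le
      have := hmono (Set.self_mem_Ici) (Set.mem_Ici.mpr h1) h1
      rwa [hg1] at this
    · have hanti : AntitoneOn gfun (Set.Icc t 1) := by
        apply antitoneOn_of_deriv_nonpos (convex_Icc t 1)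
        · exact fun x hx => (hasDeriv_g (lt_of_lt_of_le ht hx.1)).continuousAt.continuousWithinAt
        · intro x hx
          rw [interior_Icc] at hx
          exact (hasDeriv_g (lt_trans ht hx.1)).differentiableAt.differentiableWithinAt
        · intro x hx
          rw [interior_Icc] at hx
          rw [(hasDeriv_g (lt_trans ht hx.1)).deriv]
          have := hg1mono (Set.mem_Ioi.mpr (lt_trans ht hx.1)) (Set.mem_Ioi.mpr one_pos) hx.2
          rw [hg11] at this
          exact this.le
      have := hanti (Set.mem_Icc.mpr ⟨le_refl t, h1.le⟩) (Set.mem_Icc.mpr ⟨h1.le, le_refl 1⟩) h1.le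
      rwa [hg1] at this
  unfold gfun at main
  linarith

lemma key_pq {p q : ℝ} (hp : 0 < p) (hq : 0 < q) :
    Real.log 2 * (p - q)^2 ≤ (p + q) * (p * Real.log (p/q) - p + q) := by
  have key := key_log_ineq (div_pos hp hq)
  have hq' : q ≠ 0 := hq.ne'
  calc Real.log 2 * (p-q)^2 = q^2 * (Real.log 2 * (p/q-1)^2) := by field_simp; try ring
    _ ≤ q^2 * ((p/q+1)*(p/q*Real.log (p/q) - p/q + 1)) :=
        mul_le_mul_of_nonneg_left key (sq_nonneg q)
    _ = (p+q)*(p*Real.log (p/q) - p + q) := by field_simp; try ring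

lemma pinsker_fin {α : Type*} [Fintype α] (τ ν : α → ℝ) (hτ : ∀ x, 0 < τ x) (hν : ∀ x, 0 < ν x)
    (hτ1 : ∑ x, τ x = 1) (hν1 : ∑ x, ν x = 1) :
    ((1:ℝ)/2 * ∑ x, |τ x - ν x|)^2 ≤ (∑ x, τ x * Real.logb 2 (τ x / ν x)) / 2 := by
  have hlog2 : (0:ℝ) < Real.log 2 := Real.log_pos one_lt_two
  have hw : ∀ x, (0:ℝ) < τ x + ν x := fun x => add_pos (hτ x) (hν x)
  have CS := Finset.sq_sum_div_le_sum_sq_div Finset.univ (fun x => |τ x - ν x|)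
      (g := fun x => τ x + ν x) (fun x _ => hw x)
  have hsum2 : ∑ x, (τ x + ν x) = 2 := by rw [Finset.sum_add_distrib, hτ1, hν1]; norm_num
  rw [hsum2] at CS
  have pointwise : ∀ x, |τ x - ν x|^2 / (τ x + ν x) ≤
      (τ x * Real.log (τ x / ν x) - τ x + ν x) / Real.log 2 := by
    intro x
    rw [div_le_div_iff₀ (hw x) hlog2, sq_abs]
    nlinarith [key_pq (hτ x) (hν x)]
  have hsum3 : ∑ x, (τ x * Real.log (τ x / ν x) - τ x + ν x) / Real.log 2
      = ∑ x, τ x * Real.logb 2 (τ x / ν x) := by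
    rw [← Finset.sum_div]
    have h1 : ∑ x, (τ x * Real.log (τ x / ν x) - τ x + ν x)
        = ∑ x, τ x * Real.log (τ x / ν x) := by
      rw [Finset.sum_add_distrib, Finset.sum_sub_distrib, hτ1, hν1]; ring
    rw [h1, Finset.sum_div]
    apply Finset.sum_congr rfl
    intro x _
    rw [Real.logb, mul_div_assoc]
  have h2 : ∑ x, |τ x - ν x| ^ 2 / (τ x + ν x)
      ≤ ∑ x, τ x * Real.logb 2 (τ x / ν x) := by
    rw [← hsum3]; exact Finset.sum_le_sum (fun x _ => pointwise x)
  have h3 := CS.trans h2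
  have h4 : (0:ℝ) ≤ (∑ x, |τ x - ν x|)^2 := sq_nonneg _
  nlinarith [h3]

/-- let `μ'(x) = (1 − 2^{−n})·μ(x) + 2^{−2n}` and
`f_{μ'}(x) = log₂(2^{−n}/μ'(x))`. If `KL(D‖μ) ≤ KL(D‖U)` and `f_{μ'}`
distinguishes `D` from `U` by at most `ε`, then the statistical distance
between `U` and `μ` is at most `sqrt((ε + log₂(1/(1 − 2^{−n})))/2) + 2^{−n}`. -/
theorem stmt6 (n : ℕ) (hn : 0 < n)
    (D μ : (Fin n → Bool) → ℝ)
    (hDpos : ∀ x, 0 ≤ D x) (hDsum : ∑ x, D x = 1)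
    (hμpos : ∀ x, 0 ≤ μ x) (hμsum : ∑ x, μ x = 1)
    (U : (Fin n → Bool) → ℝ) (hU : ∀ x, U x = (2 : ℝ) ^ (-(n : ℤ)))
    (μ' : (Fin n → Bool) → ℝ)
    (hμ' : ∀ x, μ' x = (1 - (2 : ℝ) ^ (-(n : ℤ))) * μ x + (2 : ℝ) ^ (-(2 * n : ℤ)))
    (f : (Fin n → Bool) → ℝ)
    (hf : ∀ x, f x = Real.logb 2 ((2 : ℝ) ^ (-(n : ℤ)) / μ' x))
    (ε : ℝ) (hε : 0 ≤ ε)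
    (hKL : KL D μ ≤ KL D U)
    (hdist : |(∑ x, D x * f x) - ∑ x, (2 : ℝ) ^ (-(n : ℤ)) * f x| ≤ ε) :
    (1 / 2) * ∑ x, |U x - μ x| ≤
      Real.sqrt ((ε + Real.logb 2 (1 / (1 - (2 : ℝ) ^ (-(n : ℤ))))) / 2) +
        (2 : ℝ) ^ (-(n : ℤ)) := by
  have hlog2 : (0:ℝ) < Real.log 2 := Real.log_pos one_lt_two
  set u : ℝ := (2:ℝ)^(-(n:ℤ)) with hu
  set v : ℝ := (2:ℝ)^(-(2*n:ℤ)) with hv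
  have hupos : 0 < u := by rw [hu]; positivity
  have hvpos : 0 < v := by rw [hv]; positivity
  have hule : u ≤ 1/2 := by
    rw [hu]
    calc (2:ℝ)^(-(n:ℤ)) ≤ (2:ℝ)^(-(1:ℤ)) := by
          apply zpow_le_zpow_right₀ one_le_two
          omega
      _ = 1/2 := by norm_num
  have h1u : 0 < 1 - u := by linarith
  have hcard : (Fintype.card (Fin n → Bool)) = 2^n := by simp
  have hpow : ((2:ℝ)^n) * u = 1 := by
    rw [hu, ← zpow_natCast (2:ℝ) n, ← zpow_add₀ (two_ne_zero)]
    simp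
  have hpow2 : ((2:ℝ)^n) * v = u := by
    rw [hu, hv, ← zpow_natCast (2:ℝ) n, ← zpow_add₀ (two_ne_zero)]
    congr 1
    push_cast
    ring
  have hUsum : ∑ x, U x = 1 := by
    simp only [hU]
    rw [Finset.sum_const, Finset.card_univ, nsmul_eq_mul, hcard]
    push_cast
    exact hpow
  have hμ'pos : ∀ x, 0 < μ' x := by
    intro x
    rw [hμ']
    nlinarith [mul_nonneg h1u.le (hμpos x)]
  have hμ'sum : ∑ x, μ' x = 1 := by
    simp only [hμ']
    rw [Finset.sum_add_distrib, ← Finset.mul_sum, hμsum, Finset.sum_const, Finset.card_univ,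
      nsmul_eq_mul, hcard]
    push_cast
    rw [hpow2]
    ring
  -- extract real KL inequality
  have hKLU_ne : ¬ ∃ x, 0 < D x ∧ U x = 0 := by
    rintro ⟨x, hx, hx0⟩
    rw [hU] at hx0
    exact absurd hx0 hupos.ne'
  have hKLμ_ne : ¬ ∃ x, 0 < D x ∧ μ x = 0 := by
    intro hex
    rw [KL, if_pos hex, KL, if_neg hKLU_ne] at hKL
    exact absurd (top_le_iff.mp hKL) (EReal.coe_ne_top _)
  have hKLreal : (∑ x, D x * Real.logb 2 (D x / μ x)) ≤ ∑ x, D x * Real.logb 2 (D x / U x) := by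
    rw [KL, if_neg hKLμ_ne, KL, if_neg hKLU_ne] at hKL
    exact_mod_cast hKL
  have hDμ : ∀ x, 0 < D x → 0 < μ x := fun x hx =>
    lt_of_le_of_ne (hμpos x) (fun h => hKLμ_ne ⟨x, hx, h.symm⟩)
  set c : ℝ := Real.logb 2 (1/(1-u)) with hc
  -- claim A
  have claimA : ∑ x, D x * f x
      = (∑ x, D x * Real.logb 2 (D x / μ' x)) - ∑ x, D x * Real.logb 2 (D x / U x) := by
    rw [← Finset.sum_sub_distrib]
    apply Finset.sum_congr rfl
    intro x _
    rcases eq_or_lt_of_le (hDpos x) with h0 | h0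
    · simp [← h0]
    · rw [hf, hU, ← mul_sub]
      congr 1
      rw [Real.logb_div h0.ne' (hμ'pos x).ne', Real.logb_div h0.ne' hupos.ne',
        Real.logb_div hupos.ne' (hμ'pos x).ne']
      ring
  -- claim B
  have claimB : ∑ x, D x * Real.logb 2 (D x / μ' x)
      ≤ (∑ x, D x * Real.logb 2 (D x / μ x)) + c := by
    have hpt : ∀ x, D x * Real.logb 2 (D x / μ' x)
        ≤ D x * Real.logb 2 (D x / μ x) + D x * c := by
      intro x
      rcases eq_or_lt_of_le (hDpos x) with h0 | h0
      · simp [← h0]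
      · have hμx := hDμ x h0
        have hstep : Real.logb 2 (D x / μ' x) ≤ Real.logb 2 (D x / μ x) + c := by
          have hden : (0:ℝ) < (1-u) * μ x := mul_pos h1u hμx
          have hle : D x / μ' x ≤ D x / ((1-u) * μ x) := by
            apply div_le_div_of_nonneg_left h0.le hden
            rw [hμ']
            linarith
          have heq : D x / ((1-u)*μ x) = (D x / μ x) * (1/(1-u)) := by
            field_simp
          calc Real.logb 2 (D x / μ' x) ≤ Real.logb 2 (D x / ((1-u)*μ x)) :=
                Real.logb_le_logb_of_le one_lt_two (div_pos h0 (hμ'pos x)) hle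
            _ = Real.logb 2 (D x / μ x) + c := by
                rw [heq, Real.logb_mul (div_pos h0 hμx).ne' (by positivity), hc]
        nlinarith [mul_le_mul_of_nonneg_left hstep (hDpos x)]
    calc ∑ x, D x * Real.logb 2 (D x / μ' x)
        ≤ ∑ x, (D x * Real.logb 2 (D x / μ x) + D x * c) :=
          Finset.sum_le_sum (fun x _ => hpt x)
      _ = (∑ x, D x * Real.logb 2 (D x / μ x)) + (∑ x, D x) * c := by
          rw [Finset.sum_add_distrib, Finset.sum_mul]
      _ = (∑ x, D x * Real.logb 2 (D x / μ x)) + c := by rw [hDsum, one_mul]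
  have claimC : ∑ x, D x * f x ≤ c := by
    rw [claimA]; linarith
  have claimD : ∑ x, u * f x = ∑ x, U x * Real.logb 2 (U x / μ' x) := by
    apply Finset.sum_congr rfl
    intro x _
    rw [hU, hf]
  have claimE : ∑ x, U x * Real.logb 2 (U x / μ' x) ≤ ε + c := by
    have h1 := (abs_le.mp hdist).1
    linarith [claimC, claimD.symm.le]
  have hP := pinsker_fin U μ' (fun x => by rw [hU]; exact hupos) hμ'pos hUsum hμ'sum
  have hhalf : (1/2:ℝ) * ∑ x, |U x - μ' x| ≤ Real.sqrt ((ε + c)/2) := by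
    have h0 : (0:ℝ) ≤ (1/2:ℝ) * ∑ x, |U x - μ' x| := by positivity
    calc (1/2:ℝ) * ∑ x, |U x - μ' x| = Real.sqrt (((1/2:ℝ) * ∑ x, |U x - μ' x|)^2) :=
          (Real.sqrt_sq h0).symm
      _ ≤ Real.sqrt ((ε + c)/2) := Real.sqrt_le_sqrt (by linarith)
  have htri : ∑ x, |U x - μ x| ≤ (∑ x, |U x - μ' x|) + ∑ x, |μ' x - μ x| := by
    rw [← Finset.sum_add_distrib]
    exact Finset.sum_le_sum (fun x _ => abs_sub_le _ _ _)
  have hμ'μ : ∑ x, |μ' x - μ x| ≤ 2*u := by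
    have hpt : ∀ x, |μ' x - μ x| ≤ v + u * μ x := by
      intro x
      rw [hμ']
      have he : (1-u)*μ x + v - μ x = v - u * μ x := by ring
      rw [he]
      calc |v - u * μ x| ≤ |v| + |u * μ x| := abs_sub _ _
        _ = v + u * μ x := by
            rw [abs_of_pos hvpos, abs_of_nonneg (mul_nonneg hupos.le (hμpos x))]
    calc ∑ x, |μ' x - μ x| ≤ ∑ x, (v + u * μ x) := Finset.sum_le_sum (fun x _ => hpt x)
      _ = (Fintype.card (Fin n → Bool) : ℝ) * v + u * ∑ x, μ x := by
          rw [Finset.sum_add_distrib, ← Finset.mul_sum, Finset.sum_const, Finset.card_univ,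
            nsmul_eq_mul]
      _ = 2*u := by
          rw [hμsum, hcard]
          push_cast
          rw [hpow2]
          ring
  linarith
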